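/- Let f be a function in the Hardy space H¹ of the unit disc with f(0) ≥ 0, set a := √(f(0)) and b := (1/2π)∫₀^{2π} f^{1/2}(e^{iθ}) dθ, where f^{1/2} is the pointwise principal square-root of f. Then ‖Bf‖₁ ≤ √( (‖f‖₁ + f(0))² − 4·f(0)·(Re b)² ), where B is the backward shift. -/

import Mathlib

open MeasureTheory Real Set

noncomputable section

/-- The backward shift operator: `Bf(z) = (f(z) - f(0))/z` for `z ≠ 0`, `Bf(0) = f'(0)`. -/
def bwdShift (f : ℂ → ℂ) : ℂ → ℂ :=
  fun z => if z = 0 then deriv f 0 else (f z - f 0) / z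

/-- The point `r·e^{iθ}`. -/
def circlePoint (r θ : ℝ) : ℂ := (r : ℂ) * Complex.exp ((θ : ℂ) * Complex.I)

/-- The integral mean `(1/2π)∫₀^{2π} |f(re^{iθ})| dθ`. -/
def hardyMean1 (f : ℂ → ℂ) (r : ℝ) : ℝ :=
  (2 * π)⁻¹ * ∫ θ in (0:ℝ)..(2 * π), ‖f (circlePoint r θ)‖

/-- Membership in the Hardy space `H¹` of the unit disc. -/
def MemHardy1 (f : ℂ → ℂ) : Prop :=
  DifferentiableOn ℂ f (Metric.ball (0:ℂ) 1) ∧ BddAbove (hardyMean1 f '' Set.Ioo 0 1)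

/-- The `H¹` norm: `sup_{0<r<1} (1/2π)∫₀^{2π} |f(re^{iθ})| dθ`. -/
def hardyNorm1 (f : ℂ → ℂ) : ℝ := sSup (hardyMean1 f '' Set.Ioo 0 1)

/-- `g` gives the radial boundary values of `f` for a.e. `θ ∈ (0, 2π]`. -/
def IsRadialLimit (f : ℂ → ℂ) (g : ℝ → ℂ) : Prop :=
  ∀ᵐ θ ∂(volume.restrict (Set.Ioc (0:ℝ) (2 * π))),
    Filter.Tendsto (fun r : ℝ => f (circlePoint r θ)) (nhdsWithin 1 (Set.Iio 1)) (nhds (g θ))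

/-- `I` is an inner function: bounded analytic on the disc with unimodular radial
boundary values almost everywhere. -/
def IsInnerFn (I : ℂ → ℂ) : Prop :=
  DifferentiableOn ℂ I (Metric.ball (0:ℂ) 1) ∧
  (∀ z ∈ Metric.ball (0:ℂ) 1, ‖I z‖ ≤ 1) ∧
  ∀ᵐ θ ∂(volume.restrict (Set.Ioc (0:ℝ) (2 * π))),
    ∃ w : ℂ, ‖w‖ = 1 ∧
      Filter.Tendsto (fun r : ℝ => I (circlePoint r θ)) (nhdsWithin 1 (Set.Iio 1)) (nhds w)

/-- The pointwise principal square root: `0` at `0`, and `√|w|·e^{i·Arg(w)/2}` otherwise. -/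
def psqrt (w : ℂ) : ℂ :=
  if w = 0 then 0
  else (Real.sqrt ‖w‖ : ℂ) * Complex.exp (((w.arg / 2 : ℝ) : ℂ) * Complex.I)

end

/-!
Write `f(0) = a²` with `a ≥ 0`. On the circle `|z| = ρ`, with `s = f^{1/2}`, we have
`|f - a²| = |s - a| |s + a|` and `|s ∓ a|² = |f| + a² ∓ 2a Re s`, so Cauchy–Schwarz gives
`(ρ M(Bf, ρ))² + (2a ⟨Re s⟩_ρ)² ≤ (M(f, ρ) + a²)² ≤ (‖f‖₁ + a²)²`, where `M(·, ρ)` and `⟨·⟩_ρ`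
are means over the circle. Only `Re f^{1/2} = √((|f| + Re f)/2)` enters, and it is a continuous
function of `f`. The means `M(Bf, ρ)` increase with `ρ` by Poisson's formula, and Fatou's lemma
bounds `Re b` by `liminf_{ρ → 1} ⟨Re s⟩_ρ`.
-/

open Filter Topology Metric

noncomputable def reSqrt (w : ℂ) : ℝ := √((‖w‖ + w.re) / 2)

lemma reSqrt_nonneg (w : ℂ) : 0 ≤ reSqrt w := Real.sqrt_nonneg _

lemma reSqrt_sq (w : ℂ) : reSqrt w ^ 2 = (‖w‖ + w.re) / 2 :=
  Real.sq_sqrt (by linarith [neg_abs_le w.re, Complex.abs_re_le_norm w])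

lemma reSqrt_sq_le_norm (w : ℂ) : reSqrt w ^ 2 ≤ ‖w‖ := by
  rw [reSqrt_sq]; linarith [le_abs_self w.re, Complex.abs_re_le_norm w]

lemma continuous_reSqrt : Continuous reSqrt := by
  unfold reSqrt; fun_prop

lemma re_psqrt (w : ℂ) : (psqrt w).re = reSqrt w := by
  rcases eq_or_ne w 0 with rfl | hw
  · simp [psqrt, reSqrt]
  rw [psqrt, if_neg hw, Complex.re_ofReal_mul, Complex.exp_ofReal_mul_I_re,
    Real.cos_half (Complex.neg_pi_lt_arg w).le (Complex.arg_le_pi w), Complex.cos_arg hw,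
    ← Real.sqrt_mul (norm_nonneg w), reSqrt]
  congr 1
  field_simp [norm_ne_zero_iff.mpr hw]

lemma norm_sub_sq_eq_sqrt_mul_sqrt (w : ℂ) (a : ℝ) :
    ‖w - ((a ^ 2 : ℝ) : ℂ)‖ =
      √(‖w‖ + a ^ 2 - 2 * a * reSqrt w) * √(‖w‖ + a ^ 2 + 2 * a * reSqrt w) := by
  have h0 : 0 ≤ ‖w‖ + a ^ 2 - 2 * a * reSqrt w := by
    nlinarith [reSqrt_sq_le_norm w, reSqrt_nonneg w, sq_nonneg (a - reSqrt w)]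
  rw [← Real.sqrt_mul h0, ← Real.sqrt_sq (norm_nonneg _)]
  congr 1
  have hn : ‖w‖ ^ 2 = w.re ^ 2 + w.im ^ 2 := by rw [Complex.sq_norm, Complex.normSq_apply]; ring
  have hd : ‖w - ((a ^ 2 : ℝ) : ℂ)‖ ^ 2 = (w.re - a ^ 2) ^ 2 + w.im ^ 2 := by
    rw [Complex.sq_norm, Complex.normSq_apply, Complex.sub_re, Complex.sub_im, Complex.ofReal_re,
      Complex.ofReal_im]; ring
  rw [hd]
  linear_combination (4 * a ^ 2) * reSqrt_sq w - hn

section Integrals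

variable {α : Type*} [MeasurableSpace α] {μ : Measure α}

theorem integral_sqrt_mul_sqrt_le {U V : α → ℝ} (hU : Integrable U μ) (hV : Integrable V μ)
    (hU0 : 0 ≤ᵐ[μ] U) (hV0 : 0 ≤ᵐ[μ] V) :
    ∫ x, √(U x) * √(V x) ∂μ ≤ √(∫ x, U x ∂μ) * √(∫ x, V x ∂μ) := by
  have memLp_sqrt : ∀ W : α → ℝ, Integrable W μ → 0 ≤ᵐ[μ] W →
      MemLp (fun x => √(W x)) (ENNReal.ofReal 2) μ ∧ ∫ x, √(W x) ^ (2 : ℝ) ∂μ = ∫ x, W x ∂μ := by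
    intro W hW hW0
    have hsq : (fun x => √(W x) ^ (2 : ℝ)) =ᵐ[μ] W := hW0.mono fun x hx => by
      simp [Real.sq_sqrt hx]
    refine ⟨?_, integral_congr_ae hsq⟩
    rw [ENNReal.ofReal_ofNat, memLp_two_iff_integrable_sq
      (Real.continuous_sqrt.comp_aestronglyMeasurable hW.aestronglyMeasurable)]
    exact hW.congr (hsq.mono fun x hx => by simpa [Real.rpow_two] using hx.symm)
  obtain ⟨hUm, hUi⟩ := memLp_sqrt U hU hU0
  obtain ⟨hVm, hVi⟩ := memLp_sqrt V hV hV0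
  have := integral_mul_le_Lp_mul_Lq_of_nonneg Real.HolderConjugate.two_two
    (ae_of_all _ fun x => Real.sqrt_nonneg (U x)) (ae_of_all _ fun x => Real.sqrt_nonneg (V x))
    hUm hVm
  rwa [hUi, hVi, ← Real.sqrt_eq_rpow, ← Real.sqrt_eq_rpow] at this

theorem sq_integral_norm_sub_sq_add_sq_le [IsFiniteMeasure μ] {w : α → ℂ} (hw : Integrable w μ)
    (a : ℝ) :
    (∫ x, ‖w x - ((a ^ 2 : ℝ) : ℂ)‖ ∂μ) ^ 2 + (2 * a * ∫ x, reSqrt (w x) ∂μ) ^ 2 ≤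
      (∫ x, ‖w x‖ ∂μ + μ.real Set.univ * a ^ 2) ^ 2 := by
  have hS : Integrable (fun x => reSqrt (w x)) μ :=
    (hw.norm.add (integrable_const 1)).mono' (continuous_reSqrt.comp_aestronglyMeasurable hw.1)
      (ae_of_all _ fun x => by
        rw [Real.norm_of_nonneg (reSqrt_nonneg _), Pi.add_apply]
        nlinarith [reSqrt_sq_le_norm (w x), reSqrt_nonneg (w x)])
  have hA : Integrable (fun x => ‖w x‖ + a ^ 2) μ := hw.norm.add (integrable_const _)
  have hB : Integrable (fun x => 2 * a * reSqrt (w x)) μ := hS.const_mul _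
  have hU : ∫ x, ‖w x‖ + a ^ 2 - 2 * a * reSqrt (w x) ∂μ =
      ∫ x, ‖w x‖ ∂μ + μ.real Set.univ * a ^ 2 - 2 * a * ∫ x, reSqrt (w x) ∂μ := by
    rw [integral_sub hA hB, integral_add hw.norm (integrable_const _), integral_const,
      integral_const_mul, smul_eq_mul]
  have hV : ∫ x, ‖w x‖ + a ^ 2 + 2 * a * reSqrt (w x) ∂μ =
      ∫ x, ‖w x‖ ∂μ + μ.real Set.univ * a ^ 2 + 2 * a * ∫ x, reSqrt (w x) ∂μ := by
    rw [integral_add hA hB, integral_add hw.norm (integrable_const _), integral_const,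
      integral_const_mul, smul_eq_mul]
  have hU0 : ∀ x, 0 ≤ ‖w x‖ + a ^ 2 - 2 * a * reSqrt (w x) := fun x => by
    nlinarith [reSqrt_sq_le_norm (w x), reSqrt_nonneg (w x), sq_nonneg (a - reSqrt (w x))]
  have hV0 : ∀ x, 0 ≤ ‖w x‖ + a ^ 2 + 2 * a * reSqrt (w x) := fun x => by
    nlinarith [reSqrt_sq_le_norm (w x), reSqrt_nonneg (w x), sq_nonneg (a + reSqrt (w x))]
  have hCS := integral_sqrt_mul_sqrt_le (hA.sub hB) (hA.add hB)
    (ae_of_all _ hU0) (ae_of_all _ hV0)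
  simp only [Pi.sub_apply, Pi.add_apply, ← norm_sub_sq_eq_sqrt_mul_sqrt, hU, hV] at hCS
  rw [← Real.sqrt_mul (hU ▸ integral_nonneg hU0)] at hCS
  have hI0 : 0 ≤ ∫ x, ‖w x - ((a ^ 2 : ℝ) : ℂ)‖ ∂μ := integral_nonneg fun x => norm_nonneg _
  linear_combination (Real.le_sqrt hI0 (mul_nonneg (hU ▸ integral_nonneg hU0)
    (hV ▸ integral_nonneg hV0))).1 hCS

theorem integral_le_of_tendsto_ae_of_integral_le {ι : Type*} {l : Filter ι}
    [l.IsCountablyGenerated] [l.NeBot] {F : ι → α → ℝ} {G : α → ℝ} {C : ι → ℝ} {c : ℝ}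
    (hF0 : ∀ i x, 0 ≤ F i x)
    (hF : ∀ᶠ i in l, Integrable (F i) μ) (hlim : ∀ᵐ x ∂μ, Tendsto (fun i => F i x) l (𝓝 (G x)))
    (hC : ∀ᶠ i in l, ∫ x, F i x ∂μ ≤ C i) (hc : Tendsto C l (𝓝 c)) :
    ∫ x, G x ∂μ ≤ c := by
  classical
  -- Fatou's lemma needs every `F i` to be measurable, not just eventually.
  let F' i := if Integrable (F i) μ then F i else 0
  have hF'F : ∀ᶠ i in l, F' i = F i := hF.mono fun i hi => if_pos hi
  have hF'int : ∀ i, Integrable (F' i) μ := fun i => by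
    by_cases hi : Integrable (F i) μ <;> simp [F', hi]
  have hF'0 : ∀ i x, 0 ≤ F' i x := fun i x => by
    by_cases hi : Integrable (F i) μ <;> simp [F', hi, hF0]
  have hlim' : ∀ᵐ x ∂μ, Tendsto (fun i => F' i x) l (𝓝 (G x)) :=
    hlim.mono fun x hx => hx.congr' (hF'F.mono fun i hi => congrFun hi.symm x)
  have hG0 : 0 ≤ᵐ[μ] G := hlim'.mono fun x hx => ge_of_tendsto' hx fun i => hF'0 i x
  have hc0 : 0 ≤ c := ge_of_tendsto hc (hC.mono fun i hi => (integral_nonneg (hF0 i)).trans hi)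
  have hfatou : ∫⁻ x, ENNReal.ofReal (G x) ∂μ ≤ ENNReal.ofReal c :=
    calc ∫⁻ x, ENNReal.ofReal (G x) ∂μ
        = ∫⁻ x, liminf (fun i => ENNReal.ofReal (F' i x)) l ∂μ :=
          lintegral_congr_ae (hlim'.mono fun x hx => (ENNReal.tendsto_ofReal hx).liminf_eq.symm)
      _ ≤ liminf (fun i => ∫⁻ x, ENNReal.ofReal (F' i x) ∂μ) l :=
          lintegral_liminf_le' fun i => (hF'int i).1.aemeasurable.ennreal_ofReal
      _ = liminf (fun i => ENNReal.ofReal (∫ x, F' i x ∂μ)) l := by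
          simp_rw [ofReal_integral_eq_lintegral_ofReal (hF'int _) (ae_of_all _ (hF'0 _))]
      _ ≤ liminf (fun i => ENNReal.ofReal (C i)) l :=
          liminf_le_liminf ((hC.and hF'F).mono fun i hi =>
            ENNReal.ofReal_le_ofReal (hi.2 ▸ hi.1))
      _ = ENNReal.ofReal c := (ENNReal.tendsto_ofReal hc).liminf_eq
  rw [integral_eq_lintegral_of_nonneg_ae hG0
    (aestronglyMeasurable_of_tendsto_ae l (fun i => (hF'int i).1) hlim')]
  exact ENNReal.toReal_le_of_le_ofReal hc0 hfatou

end Integrals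

theorem intervalIntegral_integral_swap_of_continuous {E : Type*} [NormedAddCommGroup E]
    [NormedSpace ℝ E] {f : ℝ → ℝ → E} (hf : Continuous f.uncurry) {a b c d : ℝ}
    (hab : a ≤ b) (hcd : c ≤ d) :
    ∫ x in a..b, ∫ y in c..d, f x y = ∫ y in c..d, ∫ x in a..b, f x y := by
  simp only [intervalIntegral.integral_of_le hab, intervalIntegral.integral_of_le hcd]
  apply integral_integral_swap
  rw [Measure.prod_restrict, ← Measure.volume_eq_prod]
  exact (hf.continuousOn.integrableOn_compact (isCompact_Icc.prod isCompact_Icc)).mono_set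
    (prod_mono Ioc_subset_Icc_self Ioc_subset_Icc_self)

lemma poissonKernel_circleMap_comm (r ρ θ t : ℝ) :
    poissonKernel 0 (circleMap 0 r θ) (circleMap 0 ρ t) =
      poissonKernel 0 (circleMap 0 r t) (circleMap 0 ρ θ) := by
  have hsq : ∀ θ t, ‖circleMap 0 ρ t - circleMap 0 r θ‖ ^ 2 =
      ρ ^ 2 + r ^ 2 - 2 * ρ * r * (Real.cos t * Real.cos θ + Real.sin t * Real.sin θ) := by
    intro θ t
    rw [Complex.sq_norm, Complex.normSq_apply]
    simp only [circleMap, zero_add, Complex.sub_re, Complex.sub_im, Complex.re_ofReal_mul,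
      Complex.im_ofReal_mul, Complex.exp_ofReal_mul_I_re, Complex.exp_ofReal_mul_I_im]
    linear_combination ρ ^ 2 * Real.sin_sq_add_cos_sq t + r ^ 2 * Real.sin_sq_add_cos_sq θ
  simp only [poissonKernel_def, sub_zero, norm_circleMap_zero, hsq]
  ring_nf

lemma circleAverage_poissonKernel {c w : ℂ} {R : ℝ} (hw : w ∈ ball c R) :
    circleAverage (poissonKernel c w) c R = 1 := by
  have h := (diffContOnCl_const (c := (1 : ℂ))).circleAverage_poissonKernel_smul hw
  simp only [circleAverage_def, Pi.smul_apply', smul_eq_mul, mul_one,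
    intervalIntegral.integral_ofReal, Complex.real_smul] at h ⊢
  exact_mod_cast h

section Poisson

variable {E : Type*} [NormedAddCommGroup E] [NormedSpace ℂ E] [CompleteSpace E]

lemma norm_le_circleAverage_poissonKernel_mul_norm {F : ℂ → E} {c w : ℂ} {R : ℝ}
    (hF : DiffContOnCl ℂ F (ball c R)) (hw : w ∈ ball c R) :
    ‖F w‖ ≤ circleAverage (fun z => poissonKernel c w z * ‖F z‖) c R := by
  have hwR : ‖w - c‖ < R := mem_ball_iff_norm.1 hw
  rw [← hF.circleAverage_poissonKernel_smul hw, circleAverage_def, circleAverage_def, norm_smul,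
    Real.norm_of_nonneg (by positivity), smul_eq_mul]
  gcongr
  refine (intervalIntegral.norm_integral_le_integral_norm two_pi_pos.le).trans_eq
    (intervalIntegral.integral_congr fun θ _ => ?_)
  have hP : 0 ≤ poissonKernel c w (circleMap c R θ) := by
    rw [poissonKernel_def, circleMap_sub_center, norm_circleMap_zero]
    have : ‖w - c‖ ^ 2 ≤ |R| ^ 2 := by gcongr; exact hwR.le.trans (le_abs_self R)
    exact div_nonneg (sub_nonneg.2 this) (sq_nonneg _)
  simp only [Pi.smul_apply', norm_smul, Real.norm_of_nonneg hP]

theorem circleAverage_norm_le_of_lt {F : ℂ → E} {r ρ : ℝ} (hF : DiffContOnCl ℂ F (ball 0 ρ))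
    (hr : 0 ≤ r) (hrρ : r < ρ) :
    circleAverage (fun z => ‖F z‖) 0 r ≤ circleAverage (fun z => ‖F z‖) 0 ρ := by
  have hρ : 0 < ρ := hr.trans_lt hrρ
  have hmem : ∀ θ, circleMap 0 r θ ∈ ball 0 ρ := fun θ => by
    simpa [abs_of_nonneg hr] using hrρ
  have hcont : ∀ s, |s| ≤ ρ → Continuous fun t => ‖F (circleMap 0 s t)‖ := fun s hs =>
    continuous_norm.comp (hF.continuousOn.comp_continuous (continuous_circleMap 0 s) fun t => by
      rw [closure_ball 0 hρ.ne']; simpa using hs)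
  have hne : ∀ θ t, circleMap 0 ρ t - circleMap 0 r θ ≠ 0 := fun θ t h => by
    have := congrArg norm (sub_eq_zero.1 h)
    simp only [norm_circleMap_zero, abs_of_pos hρ, abs_of_nonneg hr] at this
    exact hrρ.ne' this
  let K θ t := poissonKernel 0 (circleMap 0 r θ) (circleMap 0 ρ t) * ‖F (circleMap 0 ρ t)‖
  have hK : Continuous K.uncurry := by
    refine .mul ?_ ((hcont ρ (abs_of_pos hρ).le).comp continuous_snd)
    simp only [poissonKernel_def, sub_zero]
    exact .div (by fun_prop) (by fun_prop) fun p => pow_ne_zero _ (norm_ne_zero_iff.2 (hne _ _))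
  have hmass : ∀ t, (2 * π)⁻¹ * ∫ θ in 0..2 * π,
      poissonKernel 0 (circleMap 0 r θ) (circleMap 0 ρ t) = 1 := fun t => by
    simpa [circleAverage_def, poissonKernel_circleMap_comm r ρ _ t] using
      circleAverage_poissonKernel (hmem t)
  simp only [circleAverage_def, smul_eq_mul]
  gcongr
  calc ∫ θ in 0..2 * π, ‖F (circleMap 0 r θ)‖
      ≤ ∫ θ in 0..2 * π, (2 * π)⁻¹ * ∫ t in 0..2 * π, K θ t := by
        refine intervalIntegral.integral_mono_on two_pi_pos.le
          ((hcont r (by rw [abs_of_nonneg hr]; exact hrρ.le)).intervalIntegrable _ _)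
          ((continuous_const.mul
            (intervalIntegral.continuous_parametric_intervalIntegral_of_continuous' hK _ _)
            ).intervalIntegrable _ _) fun θ _ => ?_
        have := norm_le_circleAverage_poissonKernel_mul_norm hF (hmem θ)
        rwa [circleAverage_def, smul_eq_mul] at this
    _ = ∫ t in 0..2 * π, ((2 * π)⁻¹ * ∫ θ in 0..2 * π,
          poissonKernel 0 (circleMap 0 r θ) (circleMap 0 ρ t)) * ‖F (circleMap 0 ρ t)‖ := by
        rw [intervalIntegral.integral_const_mul,
          intervalIntegral_integral_swap_of_continuous hK two_pi_pos.le two_pi_pos.le,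
          ← intervalIntegral.integral_const_mul]
        simp only [K, intervalIntegral.integral_mul_const, mul_assoc]
    _ = ∫ t in 0..2 * π, ‖F (circleMap 0 ρ t)‖ := by simp only [hmass, one_mul]

end Poisson

lemma circlePoint_eq_circleMap (r θ : ℝ) : circlePoint r θ = circleMap 0 r θ := by
  simp [circlePoint, circleMap]

lemma hardyMean1_eq_circleAverage (f : ℂ → ℂ) (r : ℝ) :
    hardyMean1 f r = circleAverage (fun z => ‖f z‖) 0 r := by
  simp [hardyMean1, circleAverage_def, circlePoint_eq_circleMap]

lemma bwdShift_eq_dslope (f : ℂ → ℂ) : bwdShift f = dslope f 0 := by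
  ext z
  rcases eq_or_ne z 0 with rfl | hz
  · simp [bwdShift]
  · simp [bwdShift, hz, dslope_of_ne _ hz, slope_def_field]

lemma hardyMean1_bwdShift (f : ℂ → ℂ) {ρ : ℝ} (hρ : 0 < ρ) :
    hardyMean1 (bwdShift f) ρ = ρ⁻¹ * circleAverage (fun z => ‖f z - f 0‖) 0 ρ := by
  rw [hardyMean1_eq_circleAverage, ← smul_eq_mul, ← circleAverage_fun_smul]
  refine circleAverage_congr_sphere fun z hz => ?_
  have hz : ‖z‖ = ρ := by simpa [abs_of_pos hρ] using hz
  have hz0 : z ≠ 0 := by rintro rfl; simp [hρ.ne] at hz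
  simp [bwdShift, hz0, hz, div_eq_inv_mul]

namespace MemHardy1

variable {f : ℂ → ℂ}

lemma hardyMean1_le (hf : MemHardy1 f) {r : ℝ} (hr : r ∈ Ioo 0 1) :
    hardyMean1 f r ≤ hardyNorm1 f :=
  le_csSup hf.2 (mem_image_of_mem _ hr)

lemma hardyMean1_bwdShift_le (hf : MemHardy1 f) {r ρ : ℝ} (hr : 0 ≤ r) (hrρ : r < ρ)
    (hρ : ρ < 1) : hardyMean1 (bwdShift f) r ≤ hardyMean1 (bwdShift f) ρ := by
  have hdiff : DifferentiableOn ℂ (bwdShift f) (ball 0 1) := by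
    rw [bwdShift_eq_dslope]
    exact (Complex.differentiableOn_dslope (ball_mem_nhds 0 one_pos)).2 hf.1
  simp only [hardyMean1_eq_circleAverage]
  refine circleAverage_norm_le_of_lt (DifferentiableOn.diffContOnCl ?_) hr hrρ
  rw [closure_ball 0 (hr.trans_lt hrρ).ne']
  exact hdiff.mono (closedBall_subset_ball hρ)

theorem sq_mul_hardyMean1_bwdShift_add_sq_le (hf : MemHardy1 f) {a ρ : ℝ}
    (hf0 : f 0 = ((a ^ 2 : ℝ) : ℂ)) (hρ : ρ ∈ Ioo 0 1) :
    (ρ * hardyMean1 (bwdShift f) ρ) ^ 2 +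
        (2 * a * circleAverage (fun z => reSqrt (f z)) 0 ρ) ^ 2 ≤ (hardyNorm1 f + a ^ 2) ^ 2 := by
  have hcont : Continuous fun θ => f (circleMap 0 ρ θ) :=
    hf.1.continuousOn.comp_continuous (continuous_circleMap 0 ρ) fun θ => by
      simpa [abs_of_pos hρ.1] using hρ.2
  have hmean : ∀ h : ℂ → ℝ, circleAverage h 0 ρ =
      (2 * π)⁻¹ * ∫ θ in Ioc 0 (2 * π), h (circleMap 0 ρ θ) := fun h => by
    rw [circleAverage_def, intervalIntegral.integral_of_le two_pi_pos.le, smul_eq_mul]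
  have key := sq_integral_norm_sub_sq_add_sq_le
    (μ := volume.restrict (Ioc 0 (2 * π))) hcont.integrableOn_Ioc a
  rw [measureReal_restrict_apply_univ, Real.volume_real_Ioc_of_le two_pi_pos.le, sub_zero] at key
  set I := ∫ θ in Ioc 0 (2 * π), ‖f (circleMap 0 ρ θ)‖
  have hI : (2 * π)⁻¹ * I ≤ hardyNorm1 f := by
    rw [← hmean (fun z => ‖f z‖), ← hardyMean1_eq_circleAverage]
    exact hf.hardyMean1_le hρ
  have hI0 : 0 ≤ (2 * π)⁻¹ * I :=
    mul_nonneg (by positivity) (integral_nonneg fun _ => norm_nonneg _)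
  rw [hardyMean1_bwdShift f hρ.1, ← mul_assoc, mul_inv_cancel₀ hρ.1.ne', one_mul, hmean, hmean,
    hf0]
  calc _ = ((2 * π)⁻¹) ^ 2 *
        ((∫ θ in Ioc 0 (2 * π), ‖f (circleMap 0 ρ θ) - ((a ^ 2 : ℝ) : ℂ)‖) ^ 2 +
          (2 * a * ∫ θ in Ioc 0 (2 * π), reSqrt (f (circleMap 0 ρ θ))) ^ 2) := by ring
    _ ≤ ((2 * π)⁻¹) ^ 2 * (I + 2 * π * a ^ 2) ^ 2 := by gcongr
    _ = ((2 * π)⁻¹ * I + a ^ 2) ^ 2 := by field_simp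
    _ ≤ (hardyNorm1 f + a ^ 2) ^ 2 := by gcongr

end MemHardy1

theorem IsRadialLimit.average_le_of_circleAverage_le {f : ℂ → ℂ} {g : ℝ → ℂ}
    (hg : IsRadialLimit f g) (hf : ContinuousOn f (ball 0 1)) {φ : ℂ → ℝ} (hφ : Continuous φ)
    (hφ0 : ∀ w, 0 ≤ φ w) {C : ℝ → ℝ} {c : ℝ}
    (hC : ∀ᶠ ρ in 𝓝[<] 1, circleAverage (fun z => φ (f z)) 0 ρ ≤ C ρ)
    (hc : Tendsto C (𝓝[<] 1) (𝓝 c)) :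
    (2 * π)⁻¹ * ∫ θ in 0..2 * π, φ (g θ) ≤ c := by
  rw [intervalIntegral.integral_of_le two_pi_pos.le, inv_mul_le_iff₀ two_pi_pos]
  have hradii : ∀ᶠ ρ in 𝓝[<] (1 : ℝ), ρ ∈ Ioo 0 1 := Ioo_mem_nhdsLT one_pos
  refine integral_le_of_tendsto_ae_of_integral_le (F := fun ρ θ => φ (f (circleMap 0 ρ θ)))
    (fun _ _ => hφ0 _) ?_ ?_ ?_ (hc.const_mul (2 * π))
  · refine hradii.mono fun ρ hρ => Continuous.integrableOn_Ioc ?_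
    exact hφ.comp (hf.comp_continuous (continuous_circleMap 0 ρ) fun θ => by
      simpa [abs_of_pos hρ.1] using hρ.2)
  · refine hg.mono fun θ hθ => (hφ.tendsto _).comp ?_
    simpa only [circlePoint_eq_circleMap] using hθ
  · refine hC.mono fun ρ hρ => ?_
    rwa [circleAverage_def, intervalIntegral.integral_of_le two_pi_pos.le, smul_eq_mul,
      inv_mul_le_iff₀ two_pi_pos] at hρ

lemma abs_re_average_psqrt_le (g : ℝ → ℂ) :
    |((2 * π : ℝ)⁻¹ • ∫ θ in 0..2 * π, psqrt (g θ)).re| ≤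
      (2 * π)⁻¹ * ∫ θ in 0..2 * π, reSqrt (g θ) := by
  rw [Complex.real_smul, Complex.re_ofReal_mul, abs_mul, abs_of_pos (by positivity)]
  gcongr
  have hnonneg : 0 ≤ ∫ θ in 0..2 * π, reSqrt (g θ) :=
    intervalIntegral.integral_nonneg two_pi_pos.le fun θ _ => reSqrt_nonneg _
  by_cases hint : IntervalIntegrable (fun θ => psqrt (g θ)) volume 0 (2 * π)
  · have := Complex.reCLM.intervalIntegral_comp_comm hint
    simp only [Complex.reCLM_apply, re_psqrt] at this
    rw [← this, abs_of_nonneg hnonneg]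
  · simpa [intervalIntegral.integral_undef hint] using hnonneg

theorem IsRadialLimit.sq_add_sq_le_of_eventually {f : ℂ → ℂ} {g : ℝ → ℂ}
    (hg : IsRadialLimit f g) (hf : ContinuousOn f (ball 0 1)) {a m B : ℝ} (ha : 0 ≤ a)
    (h : ∀ᶠ ρ in 𝓝[<] 1,
      (ρ * m) ^ 2 + (2 * a * circleAverage (fun z => reSqrt (f z)) 0 ρ) ^ 2 ≤ B) :
    m ^ 2 + (2 * a * ((2 * π)⁻¹ * ∫ θ in 0..2 * π, reSqrt (g θ))) ^ 2 ≤ B := by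
  have hX : Tendsto (fun ρ : ℝ => B - (ρ * m) ^ 2) (𝓝[<] 1) (𝓝 (B - m ^ 2)) := by
    simpa using ((by fun_prop : Continuous fun ρ : ℝ => B - (ρ * m) ^ 2).tendsto 1).mono_left
      nhdsWithin_le_nhds
  have hX0 : 0 ≤ B - m ^ 2 := ge_of_tendsto hX (h.mono fun ρ hρ => by nlinarith)
  have hA := hg.average_le_of_circleAverage_le hf (φ := fun w => 2 * a * reSqrt w)
    (continuous_const.mul continuous_reSqrt)
    (fun w => mul_nonneg (by positivity) (reSqrt_nonneg w))
    (h.mono fun ρ hρ => ?_) (Real.continuous_sqrt.continuousAt.tendsto.comp hX)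
  · rw [intervalIntegral.integral_const_mul, mul_left_comm] at hA
    have hA0 : 0 ≤ 2 * a * ((2 * π)⁻¹ * ∫ θ in 0..2 * π, reSqrt (g θ)) :=
      mul_nonneg (by positivity) (mul_nonneg (by positivity)
        (intervalIntegral.integral_nonneg two_pi_pos.le fun θ _ => reSqrt_nonneg _))
    nlinarith [(Real.le_sqrt hA0 hX0).1 hA]
  · simp only [← smul_eq_mul (a := 2 * a), circleAverage_fun_smul]
    exact (le_abs_self _).trans (Real.abs_le_sqrt (by rw [smul_eq_mul]; linarith))

/-- For `f ∈ H¹` with `f(0) ≥ 0` and `b = (1/2π)∫₀^{2π} f^{1/2}(e^{iθ}) dθ`, we have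
`‖Bf‖₁ ≤ √((‖f‖₁ + f(0))² - 4·f(0)·(Re b)²)`. -/
theorem backward_shift_H1_key_bound (f : ℂ → ℂ) (hf : MemHardy1 f)
    (h0 : (f 0).im = 0 ∧ 0 ≤ (f 0).re) (g : ℝ → ℂ) (hg : IsRadialLimit f g)
    (b : ℂ) (hb : b = (2 * π : ℝ)⁻¹ • ∫ θ in (0:ℝ)..(2 * π), psqrt (g θ)) :
    hardyNorm1 (bwdShift f) ≤
      Real.sqrt ((hardyNorm1 f + (f 0).re) ^ 2 - 4 * (f 0).re * b.re ^ 2) := by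
  obtain ⟨a, ha, hf0⟩ : ∃ a : ℝ, 0 ≤ a ∧ f 0 = ((a ^ 2 : ℝ) : ℂ) :=
    ⟨√(f 0).re, Real.sqrt_nonneg _, by rw [Real.sq_sqrt h0.2]; exact Complex.ext rfl h0.1⟩
  have hbA : |b.re| ≤ (2 * π)⁻¹ * ∫ θ in 0..2 * π, reSqrt (g θ) := hb ▸ abs_re_average_psqrt_le g
  rw [hf0, Complex.ofReal_re]
  refine Real.sSup_le (forall_mem_image.2 fun r hr => ?_) (Real.sqrt_nonneg _)
  have hm0 : 0 ≤ hardyMean1 (bwdShift f) r := mul_nonneg (by positivity)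
    (intervalIntegral.integral_nonneg two_pi_pos.le fun _ _ => norm_nonneg _)
  have hboundary := hg.sq_add_sq_le_of_eventually hf.1.continuousOn ha
    (m := hardyMean1 (bwdShift f) r) (B := (hardyNorm1 f + a ^ 2) ^ 2) <| by
      filter_upwards [Ioo_mem_nhdsLT hr.2] with ρ hρ
      have hρ0 : 0 < ρ := hr.1.trans hρ.1
      have hmono : (ρ * hardyMean1 (bwdShift f) r) ^ 2 ≤ (ρ * hardyMean1 (bwdShift f) ρ) ^ 2 := by
        gcongr; exact hf.hardyMean1_bwdShift_le hr.1.le hρ.1 hρ.2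
      linarith [hf.sq_mul_hardyMean1_bwdShift_add_sq_le hf0 ⟨hρ0, hρ.2⟩]
  have hb2 := mul_self_le_mul_self (abs_nonneg b.re) hbA
  rw [abs_mul_abs_self] at hb2
  rw [Real.le_sqrt hm0 (by nlinarith)]
  nlinarith
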